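/- Uniqueness of the terminated integral value: if z₁ and z₂ are two termination functions for f (i.e., the terminated limits L₁ = -F(a) - lim_b ∫₀^{c₁} F(x+b) z₁'(x) dx and L₂ = -F(a) - lim_b ∫₀^{c₂} F(x+b) z₂'(x) dx both exist), then L₁ = L₂, assuming the uniform convergence hypotheses required to combine termination functions via convolution hold for both. -/

import Mathlib

/-!
Both limits are read off the double integral `∫∫ F (x + s + b) z₁'(x) z₂'(s) dx ds` as `b → ∞`.
Integrating first in `x`, the inner integral tends to `M₁` uniformly for `s` in the support of
`z₂'`, so by dominated convergence the double integral tends to `M₁ ∫ z₂' = -M₁`; integrating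
first in `s` it tends to `-M₂` in the same way. Fubini identifies the two iterated integrals.
-/

open MeasureTheory Filter intervalIntegral Set Topology

theorem intervalIntegral_eq_integral_of_forall_notMem_Icc {E : Type*} [NormedAddCommGroup E]
    [NormedSpace ℝ E] {a b : ℝ} {f : ℝ → E} (hf : ∀ x ∉ Icc a b, f x = 0) :
    ∫ x in a..b, f x = ∫ x, f x := by
  rcases le_or_gt a b with hab | hab
  · rw [integral_of_le hab, ← integral_Icc_eq_integral_Ioc]
    exact setIntegral_eq_integral_of_forall_compl_eq_zero hf
  · obtain rfl : f = 0 := funext fun x => hf x (by simp [Icc_eq_empty hab.not_ge])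
    simp

theorem tendsto_integral_mul_of_tendstoUniformlyOn {α ι : Type*} [MeasurableSpace α]
    {μ : Measure α} {l : Filter ι} [l.IsCountablyGenerated] {u : ι → α → ℝ} {M : ℝ}
    {w : α → ℝ} {s : Set α} (hw : Integrable w μ) (hws : ∀ x ∉ s, w x = 0)
    (hmeas : ∀ᶠ i in l, AEStronglyMeasurable (fun x => u i x * w x) μ)
    (hu : TendstoUniformlyOn u (fun _ => M) l s) :
    Tendsto (fun i => ∫ x, u i x * w x ∂μ) l (𝓝 (M * ∫ x, w x ∂μ)) := by
  rw [← MeasureTheory.integral_const_mul]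
  refine tendsto_integral_filter_of_dominated_convergence (fun x => (|M| + 1) * ‖w x‖) hmeas
    ?_ (hw.norm.const_mul _) (ae_of_all _ fun x => ?_)
  · filter_upwards [Metric.tendstoUniformlyOn_iff.mp hu 1 one_pos] with i hi
    refine ae_of_all _ fun x => ?_
    by_cases hx : x ∈ s
    · have hux : |u i x| ≤ |M| + 1 := by
        have := hi x hx
        rw [Real.dist_eq] at this
        linarith [abs_sub_abs_le_abs_sub (u i x) M, abs_sub_comm M (u i x)]
      rw [norm_mul, Real.norm_eq_abs]
      exact mul_le_mul_of_nonneg_right hux (norm_nonneg _)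
    · simp [hws x hx]
  · by_cases hx : x ∈ s
    · exact (hu.tendsto_at hx).mul_const _
    · simpa [hws x hx] using tendsto_const_nhds

theorem integrable_mul_mul_of_continuous {G : ℝ × ℝ → ℝ} {f g : ℝ → ℝ} {K L : Set ℝ}
    (hG : Continuous G) (hK : IsCompact K) (hL : IsCompact L)
    (hf : Integrable f) (hg : Integrable g) (hfK : ∀ x ∉ K, f x = 0) (hgL : ∀ y ∉ L, g y = 0) :
    Integrable (fun p : ℝ × ℝ => G p * (f p.1 * g p.2)) (volume.prod volume) := by
  obtain ⟨C, hC⟩ := (hK.prod hL).exists_bound_of_continuousOn hG.continuousOn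
  refine ((hf.norm.mul_prod hg.norm).const_mul C).mono'
    (hG.aestronglyMeasurable.mul (hf.mul_prod hg).aestronglyMeasurable) (ae_of_all _ fun p => ?_)
  by_cases hp : p ∈ K ×ˢ L
  · rw [norm_mul, norm_mul]
    exact mul_le_mul_of_nonneg_right (hC p hp) (by positivity)
  · rcases not_and_or.mp hp with h | h
    · simp [hfK _ h]
    · simp [hgL _ h]

section Fubini

variable {α β : Type*} [MeasurableSpace α] [MeasurableSpace β] {μ : Measure α} {ν : Measure β}
  [SFinite μ] [SFinite ν] {G : α × β → ℝ} {f : α → ℝ} {g : β → ℝ}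

theorem MeasureTheory.Integrable.integral_mul_mul_prod_right
    (h : Integrable (fun p => G p * (f p.1 * g p.2)) (μ.prod ν)) :
    Integrable (fun y => (∫ x, G (x, y) * f x ∂μ) * g y) ν := by
  refine h.integral_prod_right.congr (ae_of_all _ fun y => ?_)
  simp only [← MeasureTheory.integral_mul_const, mul_assoc]

theorem integral_integral_mul_mul_swap
    (h : Integrable (fun p => G p * (f p.1 * g p.2)) (μ.prod ν)) :
    ∫ y, (∫ x, G (x, y) * f x ∂μ) * g y ∂ν = ∫ x, (∫ y, G (x, y) * g y ∂ν) * f x ∂μ := by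
  have := integral_integral_swap (f := fun x y => G (x, y) * (f x * g y)) h
  simp only [← MeasureTheory.integral_mul_const, mul_assoc]
  rw [← this]
  congr 1; ext x; congr 1; ext y; ring

end Fubini

section Shift

variable {F f g : ℝ → ℝ} {c d : ℝ}

theorem integrable_shift_mul_mul (hF : Continuous F) (hf : Integrable f) (hg : Integrable g)
    (hfc : ∀ x ∉ Icc 0 c, f x = 0) (hgd : ∀ y ∉ Icc 0 d, g y = 0) (b : ℝ) :
    Integrable (fun p : ℝ × ℝ => F (p.1 + p.2 + b) * (f p.1 * g p.2)) (volume.prod volume) :=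
  integrable_mul_mul_of_continuous (G := fun p => F (p.1 + p.2 + b)) (by fun_prop)
    isCompact_Icc isCompact_Icc hf hg hfc hgd

theorem tendsto_integral_shift_integral_mul {M : ℝ} (hF : Continuous F) (hf : Integrable f)
    (hg : Integrable g) (hfc : ∀ x ∉ Icc 0 c, f x = 0) (hgd : ∀ y ∉ Icc 0 d, g y = 0)
    (hM : TendstoUniformlyOn (fun b s => ∫ x in (0:ℝ)..c, F (x + s + b) * f x)
      (fun _ => M) atTop (Icc 0 d)) :
    Tendsto (fun b => ∫ s, (∫ x, F (x + s + b) * f x) * g s) atTop (𝓝 (M * ∫ s, g s)) := by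
  have hM' : TendstoUniformlyOn (fun b s => ∫ x, F (x + s + b) * f x)
      (fun _ => M) atTop (Icc 0 d) := by
    refine hM.congr (Eventually.of_forall fun b s _ => ?_)
    exact intervalIntegral_eq_integral_of_forall_notMem_Icc fun x hx => by simp [hfc x hx]
  exact tendsto_integral_mul_of_tendstoUniformlyOn hg hgd (Eventually.of_forall fun b =>
    (integrable_shift_mul_mul hF hf hg hfc hgd b).integral_mul_mul_prod_right.aestronglyMeasurable)
    hM'

theorem integral_shift_integral_mul_comm (hF : Continuous F) (hf : Integrable f)
    (hg : Integrable g) (hfc : ∀ x ∉ Icc 0 c, f x = 0) (hgd : ∀ y ∉ Icc 0 d, g y = 0) (b : ℝ) :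
    ∫ s, (∫ x, F (x + s + b) * f x) * g s = ∫ x, (∫ s, F (s + x + b) * g s) * f x := by
  convert integral_integral_mul_mul_swap (integrable_shift_mul_mul hF hf hg hfc hgd b) using 5 with x
  ext s
  rw [add_comm s]

end Shift

theorem terminated_integral_unique_general
    (a c₁ c₂ : ℝ)
    (F z₁' z₂' : ℝ → ℝ) (M₁ M₂ : ℝ)
    (hF : Continuous F)
    (hz₁'int : Integrable z₁') (hz₂'int : Integrable z₂')
    (hz₁'supp : ∀ x, x ∉ Set.Icc (0:ℝ) c₁ → z₁' x = 0)
    (hz₂'supp : ∀ x, x ∉ Set.Icc (0:ℝ) c₂ → z₂' x = 0)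
    (hz₁'sum : ∫ x, z₁' x = -1) (hz₂'sum : ∫ x, z₂' x = -1)
    (hunif₁ : TendstoUniformlyOn
      (fun b s => ∫ x in (0:ℝ)..c₁, F (x + s + b) * z₁' x)
      (fun _ => M₁) atTop (Set.Icc 0 c₂))
    (hunif₂ : TendstoUniformlyOn
      (fun b s => ∫ x in (0:ℝ)..c₂, F (x + s + b) * z₂' x)
      (fun _ => M₂) atTop (Set.Icc 0 c₁)) :
    -F a - M₁ = -F a - M₂ := by
  have h₁ := tendsto_integral_shift_integral_mul hF hz₁'int hz₂'int hz₁'supp hz₂'supp hunif₁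
  have h₂ := tendsto_integral_shift_integral_mul hF hz₂'int hz₁'int hz₂'supp hz₁'supp hunif₂
  simp only [integral_shift_integral_mul_comm hF hz₁'int hz₂'int hz₁'supp hz₂'supp] at h₁
  have := tendsto_nhds_unique h₁ h₂
  rw [hz₁'sum, hz₂'sum] at this
  linarith

/-- Uniqueness of the terminated integral value: two termination functions for `f`
(whose terminated limits both exist, with the uniform-convergence hypotheses needed
for the convolution combination lemma) give the same value. -/
theorem terminated_integral_unique
    (a c₁ c₂ : ℝ) (hc₁ : 0 < c₁) (hc₂ : 0 < c₂)
    (F z₁' z₂' : ℝ → ℝ) (M₁ M₂ : ℝ)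
    (hF : Continuous F)
    (hz₁'int : Integrable z₁') (hz₂'int : Integrable z₂')
    (hz₁'supp : ∀ x, x ∉ Set.Icc (0:ℝ) c₁ → z₁' x = 0)
    (hz₂'supp : ∀ x, x ∉ Set.Icc (0:ℝ) c₂ → z₂' x = 0)
    (hz₁'sum : ∫ x, z₁' x = -1) (hz₂'sum : ∫ x, z₂' x = -1)
    (hlim₁ : Tendsto (fun b => ∫ x in (0:ℝ)..c₁, F (x + b) * z₁' x) atTop (nhds M₁))
    (hlim₂ : Tendsto (fun b => ∫ x in (0:ℝ)..c₂, F (x + b) * z₂' x) atTop (nhds M₂))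
    (hunif₁ : TendstoUniformlyOn
      (fun b s => ∫ x in (0:ℝ)..c₁, F (x + s + b) * z₁' x)
      (fun _ => M₁) atTop (Set.Icc 0 c₂))
    (hunif₂ : TendstoUniformlyOn
      (fun b s => ∫ x in (0:ℝ)..c₂, F (x + s + b) * z₂' x)
      (fun _ => M₂) atTop (Set.Icc 0 c₁)) :
    -F a - M₁ = -F a - M₂ :=
  terminated_integral_unique_general a c₁ c₂ F z₁' z₂' M₁ M₂ hF hz₁'int hz₂'int hz₁'supp hz₂'supp
    hz₁'sum hz₂'sum hunif₁ hunif₂
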